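/- arXiv:1712.08867 — 3 statements merged into one kernel-verified Lean document; each statement's English description precedes it below -/
import Mathlib

section
/- Let π̃ be a stationary probability density for k̃ on Y and define π(x) = ∫_Y s̃(x|γ) π̃(γ) dγ, which is then a stationary density for k on X. Suppose there exists R : Y × {0,1,2,…} → (0,∞) such that for every probability density ν̃ on Y and every m ≥ 0, ∫_Y | ∫_Y k̃^{(m)}(γ,γ') ν̃(γ) dγ − π̃(γ') | dγ' ≤ ∫_Y R(γ,m) ν̃(γ) dγ. Then for every probability density ν on X and every m ≥ 1, ∫_X | ∫_X k^{(m)}(x,x') ν(x) dx − π(x') | dx' ≤ ∫_X ( ∫_Y R(γ,m−1) h̃(γ|x) dγ ) ν(x) dx. -/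
open MeasureTheory

/-- `kIterM μ k m` is the (m+1)-step transition density of the kernel density `k`
with respect to the reference measure `μ`. -/
noncomputable def kIterM {A : Type*} [MeasurableSpace A] (μ : Measure A)
    (k : A → A → ℝ) : ℕ → A → A → ℝ
  | 0 => k
  | m + 1 => fun x y => ∫ z, kIterM μ k m x z * k z y ∂μ

/-!
Write `P_k f (y) = ∫ k(x, y) f(x) dx` for the push-forward of a density along a transition
density. The chain on `X` has density `k = h̃` followed by `s̃`, the flipped chain `k̃ = s̃`
followed by `h̃`, so by Fubini `P_k^{m+1} ν = P_s̃ (P_k̃^m ν̃)` with `ν̃ = P_h̃ ν`, and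
`π = P_s̃ π̃`. Pushing forward along a Markov density is an `L¹` contraction, hence the distance
on `X` is at most the distance on `Y` started from `ν̃`, which the hypothesis bounds by
`∫ R(γ, m) ν̃(γ) dγ`; Fubini once more turns this into the right-hand side. Every Fubini step is
licensed by the densities having total mass one. Since `R` is not assumed measurable, the last
step goes through `(R ν̃) / ν̃`, a measurable weight equal to `R` wherever `ν̃ ≠ 0`; where
`ν̃(γ) = 0` we have `h̃(γ|x) ν(x) = 0` for almost every `x`.
-/

open Function

variable {α β γ : Type*} [MeasurableSpace α] {μ : Measure α}

noncomputable def pushDensity (μ : Measure α) (k : α → β → ℝ) (f : α → ℝ) (y : β) : ℝ :=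
  ∫ x, k x y * f x ∂μ

lemma pushDensity_congr_ae {k : α → β → ℝ} {f g : α → ℝ} (h : f =ᵐ[μ] g) :
    pushDensity μ k f = pushDensity μ k g :=
  funext fun _ => integral_congr_ae <| h.mono fun x hx => by simp only [hx]

variable [MeasurableSpace β] [MeasurableSpace γ] {ν : Measure β} {ρ : Measure γ}

noncomputable def compDensity (ν : Measure β) (k : α → β → ℝ) (l : β → γ → ℝ)
    (x : α) (z : γ) : ℝ :=
  ∫ y, k x y * l y z ∂ν

structure IsMarkovDensity (μ : Measure α) (ν : Measure β) (k : α → β → ℝ) : Prop where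
  measurable : Measurable (uncurry k)
  nonneg : ∀ x y, 0 ≤ k x y
  integral_eq_one : ∀ᵐ x ∂μ, ∫ y, k x y ∂ν = 1

namespace IsMarkovDensity

variable {k : α → β → ℝ} {l : β → γ → ℝ} {f g : α → ℝ}

lemma pushDensity_nonneg (hk : IsMarkovDensity μ ν k) (hf : ∀ x, 0 ≤ f x) (y : β) :
    0 ≤ pushDensity μ k f y :=
  integral_nonneg fun x => mul_nonneg (hk.nonneg x y) (hf x)

lemma integrable_prod_mul [SFinite ν] (hk : IsMarkovDensity μ ν k) (hf : Integrable f μ) :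
    Integrable (fun p : α × β => k p.1 p.2 * f p.1) (μ.prod ν) := by
  refine (integrable_prod_iff (hk.measurable.aestronglyMeasurable.mul hf.1.comp_fst)).2 ⟨?_, ?_⟩
  · filter_upwards [hk.integral_eq_one] with x hx
    have hkx : Integrable (k x) ν := .of_integral_ne_zero (by rw [hx]; exact one_ne_zero)
    exact hkx.mul_const (f x)
  · refine hf.norm.congr ?_
    filter_upwards [hk.integral_eq_one] with x hx
    show ‖f x‖ = ∫ y, ‖k x y * f x‖ ∂ν
    simp only [norm_mul, Real.norm_of_nonneg (hk.nonneg x _), integral_mul_const, hx, one_mul]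

lemma integrable_pushDensity [SFinite μ] [SFinite ν] (hk : IsMarkovDensity μ ν k)
    (hf : Integrable f μ) :
    Integrable (pushDensity μ k f) ν :=
  (hk.integrable_prod_mul hf).integral_prod_right

lemma integral_pushDensity [SFinite μ] [SFinite ν] (hk : IsMarkovDensity μ ν k)
    (hf : Integrable f μ) :
    ∫ y, pushDensity μ k f y ∂ν = ∫ x, f x ∂μ := by
  unfold pushDensity
  rw [← integral_integral_swap (hk.integrable_prod_mul hf)]
  refine integral_congr_ae ?_
  filter_upwards [hk.integral_eq_one] with x hx
  rw [integral_mul_const, hx, one_mul]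

lemma integral_abs_pushDensity_sub_le [SFinite μ] [SFinite ν] (hk : IsMarkovDensity μ ν k)
    (hf : Integrable f μ) (hg : Integrable g μ) :
    ∫ y, |pushDensity μ k f y - pushDensity μ k g y| ∂ν ≤ ∫ x, |f x - g x| ∂μ := by
  have hfg : Integrable (fun x => |f x - g x|) μ := (hf.sub hg).abs
  rw [← hk.integral_pushDensity hfg]
  refine integral_mono_of_nonneg (.of_forall fun _ => abs_nonneg _)
    (hk.integrable_pushDensity hfg) ?_
  filter_upwards [(hk.integrable_prod_mul hf).prod_left_ae,
    (hk.integrable_prod_mul hg).prod_left_ae] with y hfy hgy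
  simp only [pushDensity]
  rw [← integral_sub hfy hgy]
  refine (abs_integral_le_integral_abs).trans_eq (integral_congr_ae (.of_forall fun x => ?_))
  simp only [← mul_sub, abs_mul, abs_of_nonneg (hk.nonneg x y)]

lemma comp [SFinite ν] [SFinite ρ] (hk : IsMarkovDensity μ ν k) (hl : IsMarkovDensity ν ρ l) :
    IsMarkovDensity μ ρ (compDensity ν k l) where
  measurable :=
    (((hk.measurable.comp (measurable_fst.fst.prodMk measurable_snd)).mul
      (hl.measurable.comp (measurable_snd.prodMk measurable_fst.snd))).stronglyMeasurable
      |>.integral_prod_right').measurable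
  nonneg x z := integral_nonneg fun y => mul_nonneg (hk.nonneg x y) (hl.nonneg y z)
  integral_eq_one := by
    filter_upwards [hk.integral_eq_one] with x hx
    have hkx : Integrable (k x) ν := .of_integral_ne_zero (by rw [hx]; exact one_ne_zero)
    rw [← hx, ← hl.integral_pushDensity hkx]
    simp only [compDensity, pushDensity, mul_comm]

lemma pushDensity_pushDensity [SFinite μ] [SFinite ν] [SFinite ρ]
    (hk : IsMarkovDensity μ ν k) (hl : IsMarkovDensity ν ρ l)
    (hf : Integrable f μ) :
    pushDensity ν l (pushDensity μ k f) =ᵐ[ρ] pushDensity μ (compDensity ν k l) f := by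
  have hl' : IsMarkovDensity (μ.prod ν) ρ (fun p z => l p.2 z) :=
    ⟨hl.measurable.comp (measurable_fst.snd.prodMk measurable_snd), fun p => hl.nonneg p.2,
      Measure.quasiMeasurePreserving_snd.ae hl.integral_eq_one⟩
  filter_upwards [(hl'.integrable_prod_mul (hk.integrable_prod_mul hf)).prod_left_ae]
    with z hz
  calc pushDensity ν l (pushDensity μ k f) z
      = ∫ y, ∫ x, l y z * (k x y * f x) ∂μ ∂ν := by
        simp only [pushDensity, integral_const_mul]
    _ = ∫ x, ∫ y, l y z * (k x y * f x) ∂ν ∂μ := (integral_integral_swap hz).symm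
    _ = pushDensity μ (compDensity ν k l) f z := by
      simp only [pushDensity, compDensity, ← integral_mul_const]
      congr 1 with x
      congr 1 with y
      ring

variable [SFinite μ]

lemma kIterM {k : α → α → ℝ} (hk : IsMarkovDensity μ μ k) (m : ℕ) :
    IsMarkovDensity μ μ (_root_.kIterM μ k m) := by
  induction m with
  | zero => exact hk
  | succ m ih => exact ih.comp hk

lemma integrable_iterate_pushDensity {k : α → α → ℝ} (hk : IsMarkovDensity μ μ k)
    (hf : Integrable f μ) (n : ℕ) : Integrable ((pushDensity μ k)^[n] f) μ := by
  induction n with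
  | zero => exact hf
  | succ n ih =>
    exact iterate_succ_apply' (pushDensity μ k) n f ▸ hk.integrable_pushDensity ih

lemma pushDensity_kIterM {k : α → α → ℝ} (hk : IsMarkovDensity μ μ k) (hf : Integrable f μ)
    (m : ℕ) : pushDensity μ (_root_.kIterM μ k m) f =ᵐ[μ] (pushDensity μ k)^[m + 1] f := by
  induction m with
  | zero => rfl
  | succ m ih =>
    calc pushDensity μ (_root_.kIterM μ k (m + 1)) f
        =ᵐ[μ] pushDensity μ k (pushDensity μ (_root_.kIterM μ k m) f) :=
          ((hk.kIterM m).pushDensity_pushDensity hk hf).symm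
      _ = (pushDensity μ k)^[m + 2] f := by
          rw [pushDensity_congr_ae ih, iterate_succ_apply' (pushDensity μ k) (m + 1)]

lemma iterate_pushDensity_compDensity [SFinite ν] {l : β → α → ℝ}
    (hk : IsMarkovDensity μ ν k) (hl : IsMarkovDensity ν μ l) (hf : Integrable f μ) (n : ℕ) :
    (pushDensity μ (compDensity ν k l))^[n + 1] f =ᵐ[μ]
      pushDensity ν l ((pushDensity ν (compDensity μ l k))^[n] (pushDensity μ k f)) := by
  induction n with
  | zero => exact (hk.pushDensity_pushDensity hl hf).symm
  | succ n ih =>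
    set g := (pushDensity ν (compDensity μ l k))^[n] (pushDensity μ k f)
    have hg : Integrable g ν :=
      (hl.comp hk).integrable_iterate_pushDensity (hk.integrable_pushDensity hf) n
    rw [iterate_succ_apply' _ (n + 1), iterate_succ_apply' (pushDensity ν _) n,
      pushDensity_congr_ae ih]
    calc pushDensity μ (compDensity ν k l) (pushDensity ν l g)
        =ᵐ[μ] pushDensity ν l (pushDensity μ k (pushDensity ν l g)) :=
          (hk.pushDensity_pushDensity hl (hl.integrable_pushDensity hg)).symm
      _ = pushDensity ν l (pushDensity ν (compDensity μ l k) g) :=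
          pushDensity_congr_ae (hl.pushDensity_pushDensity hk hg)

lemma ae_mul_eq_zero_of_pushDensity_eq_zero [SFinite ν] (hk : IsMarkovDensity μ ν k)
    (hf : Integrable f μ) (hf0 : ∀ x, 0 ≤ f x) {Z : Set β} (hZ : MeasurableSet Z)
    (h : ∀ᵐ y ∂ν, y ∈ Z → pushDensity μ k f y = 0) :
    ∀ᵐ p ∂μ.prod ν, p.2 ∈ Z → k p.1 p.2 * f p.1 = 0 := by
  have hFZ := (hk.integrable_prod_mul hf).indicator (measurable_snd hZ)
  have hzero :
      ∫ p, (Prod.snd ⁻¹' Z).indicator (fun p => k p.1 p.2 * f p.1) p ∂μ.prod ν = 0 := by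
    rw [integral_prod_symm _ hFZ]
    refine integral_eq_zero_of_ae ?_
    filter_upwards [h] with y hy
    by_cases hyZ : y ∈ Z
    · simpa [Set.indicator, hyZ, pushDensity] using hy hyZ
    · simp [Set.indicator, hyZ]
  have hnonneg : 0 ≤ (Prod.snd ⁻¹' Z).indicator (fun p : α × β => k p.1 p.2 * f p.1) :=
    Set.indicator_nonneg fun p _ => mul_nonneg (hk.nonneg p.1 p.2) (hf0 p.1)
  filter_upwards [(integral_eq_zero_iff_of_nonneg hnonneg hFZ).1 hzero] with p hp hpZ
  simpa [Set.indicator, hpZ] using hp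

lemma integrable_prod_mul_of_integrable_mul_pushDensity [SFinite ν]
    (hk : IsMarkovDensity μ ν k) (hf : Integrable f μ) (hf0 : ∀ x, 0 ≤ f x) {R : β → ℝ}
    (hR : Integrable (fun y => R y * pushDensity μ k f y) ν) :
    Integrable (fun p : α × β => R p.2 * (k p.1 p.2 * f p.1)) (μ.prod ν) := by
  have hF := hk.integrable_prod_mul hf
  have hg := (hk.integrable_pushDensity hf).1
  set R' : β → ℝ := fun y => hR.1.mk _ y / hg.mk _ y
  have hR'm : Measurable R' :=
    hR.1.stronglyMeasurable_mk.measurable.div hg.stronglyMeasurable_mk.measurable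
  have hRR' : ∀ᵐ y ∂ν, hg.mk _ y ≠ 0 → R y = R' y := by
    filter_upwards [hR.1.ae_eq_mk, hg.ae_eq_mk] with y h1 h2 hy
    rw [← h2] at hy
    simp only [R', ← h1, ← h2]
    field_simp
  have hvanish := hk.ae_mul_eq_zero_of_pushDensity_eq_zero hf hf0
    (measurableSet_eq_fun hg.stronglyMeasurable_mk.measurable measurable_const)
    (by filter_upwards [hg.ae_eq_mk] with y hy hy0; rwa [hy])
  refine Integrable.congr (f := fun p => R' p.2 * (k p.1 p.2 * f p.1)) ?_ ?_
  · refine (integrable_prod_iff' ((hR'm.comp measurable_snd).aestronglyMeasurable.mul hF.1)).2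
      ⟨hF.prod_left_ae.mono fun y hy => hy.const_mul (R' y), hR.norm.congr ?_⟩
    filter_upwards [hRR', hg.ae_eq_mk] with y h1 h2
    have hnorm : ∫ x, ‖R' y * (k x y * f x)‖ ∂μ = |R' y| * pushDensity μ k f y := by
      rw [pushDensity, ← integral_const_mul]
      refine integral_congr_ae (.of_forall fun x => ?_)
      simp [abs_of_nonneg (hk.nonneg x y), abs_of_nonneg (hf0 x)]
    show ‖R y * pushDensity μ k f y‖ = ∫ x, ‖R' y * (k x y * f x)‖ ∂μ
    rw [hnorm, norm_mul, Real.norm_eq_abs, Real.norm_of_nonneg (hk.pushDensity_nonneg hf0 y)]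
    by_cases hy : hg.mk _ y = 0
    · simp [h2, hy]
    · rw [h1 hy]
  · filter_upwards [hvanish, Measure.quasiMeasurePreserving_snd.ae hRR'] with p h1 h2
    by_cases hp : hg.mk _ p.2 = 0
    · simp [h1 hp]
    · rw [h2 hp]

lemma integral_mul_pushDensity_le [SFinite ν] (hk : IsMarkovDensity μ ν k)
    (hf : Integrable f μ) (hf0 : ∀ x, 0 ≤ f x) {R : β → ℝ} (hR : ∀ y, 0 ≤ R y) :
    ∫ y, R y * pushDensity μ k f y ∂ν ≤ ∫ x, (∫ y, R y * k x y ∂ν) * f x ∂μ := by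
  by_cases hRf : Integrable (fun y => R y * pushDensity μ k f y) ν
  · refine le_of_eq ?_
    calc ∫ y, R y * pushDensity μ k f y ∂ν = ∫ y, ∫ x, R y * (k x y * f x) ∂μ ∂ν := by
          simp only [pushDensity, integral_const_mul]
      _ = ∫ x, ∫ y, R y * (k x y * f x) ∂ν ∂μ :=
          (integral_integral_swap
            (hk.integrable_prod_mul_of_integrable_mul_pushDensity hf hf0 hRf)).symm
      _ = ∫ x, (∫ y, R y * k x y ∂ν) * f x ∂μ := by
          simp only [← integral_mul_const, mul_assoc]
  · rw [integral_undef hRf]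
    exact integral_nonneg fun x =>
      mul_nonneg (integral_nonneg fun y => mul_nonneg (hR y) (hk.nonneg x y)) (hf0 x)

end IsMarkovDensity

theorem integral_abs_pushDensity_kIterM_sub_le [SFinite μ] [SFinite ν] {k : α → β → ℝ}
    {l : β → α → ℝ} (hk : IsMarkovDensity μ ν k) (hl : IsMarkovDensity ν μ l) {π : β → ℝ}
    (hπ : Integrable π ν) {R : β → ℕ → ℝ} (hR : ∀ y m, 0 ≤ R y m)
    (hflip0 : ∀ g : β → ℝ, (∀ y, 0 ≤ g y) → ∫ y, g y ∂ν = 1 →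
      ∫ y, |g y - π y| ∂ν ≤ ∫ y, R y 0 * g y ∂ν)
    (hflip : ∀ g : β → ℝ, (∀ y, 0 ≤ g y) → ∫ y, g y ∂ν = 1 → ∀ m : ℕ,
      ∫ y, |pushDensity ν (kIterM ν (compDensity μ l k) m) g y - π y| ∂ν ≤
        ∫ y, R y (m + 1) * g y ∂ν)
    {f : α → ℝ} (hf0 : ∀ x, 0 ≤ f x) (hf1 : ∫ x, f x ∂μ = 1) (m : ℕ) :
    ∫ x, |pushDensity μ (kIterM μ (compDensity ν k l) m) f x - pushDensity ν l π x| ∂μ ≤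
      ∫ x, (∫ y, R y m * k x y ∂ν) * f x ∂μ := by
  have hf : Integrable f μ := .of_integral_ne_zero (by rw [hf1]; exact one_ne_zero)
  set g := pushDensity μ k f
  have hg : Integrable g ν := hk.integrable_pushDensity hf
  have hg1 : ∫ y, g y ∂ν = 1 := (hk.integral_pushDensity hf).trans hf1
  have hflipped : ∫ y, |(pushDensity ν (compDensity μ l k))^[m] g y - π y| ∂ν ≤
      ∫ y, R y m * g y ∂ν := by
    cases m with
    | zero => exact hflip0 g (hk.pushDensity_nonneg hf0) hg1
    | succ m =>
      refine (integral_congr_ae ?_).trans_le (hflip g (hk.pushDensity_nonneg hf0) hg1 m)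
      filter_upwards [(hl.comp hk).pushDensity_kIterM hg m] with y hy
      rw [hy]
  calc ∫ x, |pushDensity μ (kIterM μ (compDensity ν k l) m) f x - pushDensity ν l π x| ∂μ
      = ∫ x, |pushDensity ν l ((pushDensity ν (compDensity μ l k))^[m] g) x
          - pushDensity ν l π x| ∂μ := by
        refine integral_congr_ae ?_
        filter_upwards [(hk.comp hl).pushDensity_kIterM hf m,
          hk.iterate_pushDensity_compDensity hl hf m] with x h1 h2
        rw [h1, h2]
    _ ≤ ∫ y, |(pushDensity ν (compDensity μ l k))^[m] g y - π y| ∂ν :=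
        hl.integral_abs_pushDensity_sub_le
          ((hl.comp hk).integrable_iterate_pushDensity hg m) hπ
    _ ≤ ∫ y, R y m * g y ∂ν := hflipped
    _ ≤ ∫ x, (∫ y, R y m * k x y ∂ν) * f x ∂μ :=
        hk.integral_mul_pushDensity_le hf hf0 (hR · m)

theorem tv_bound_from_flipped_chain_general
    (p q : ℕ) (Xs : Set (Fin p → ℝ)) (Ys : Set (Fin q → ℝ))
    (hXs : MeasurableSet Xs) (hYs : MeasurableSet Ys)
    (stil : (Fin p → ℝ) → (Fin q → ℝ) → ℝ) (htil : (Fin q → ℝ) → (Fin p → ℝ) → ℝ)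
    (hsmeas : Measurable (Function.uncurry stil))
    (hhmeas : Measurable (Function.uncurry htil))
    (hsnn : ∀ x γ, 0 ≤ stil x γ) (hhnn : ∀ γ x, 0 ≤ htil γ x)
    (hsint : ∀ γ ∈ Ys, (∫ x in Xs, stil x γ) = 1)
    (hhint : ∀ x ∈ Xs, (∫ γ in Ys, htil γ x) = 1)
    (pitil : (Fin q → ℝ) → ℝ)
    (hpitint : (∫ γ in Ys, pitil γ) = 1)
    (R : (Fin q → ℝ) → ℕ → ℝ) (hRpos : ∀ γ m, 0 < R γ m)
    (hflip0 : ∀ νt : (Fin q → ℝ) → ℝ, (∀ γ, 0 ≤ νt γ) → (∫ γ in Ys, νt γ) = 1 →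
      (∫ γ' in Ys, |νt γ' - pitil γ'|) ≤ ∫ γ in Ys, R γ 0 * νt γ)
    (hflip : ∀ νt : (Fin q → ℝ) → ℝ, (∀ γ, 0 ≤ νt γ) → (∫ γ in Ys, νt γ) = 1 →
      ∀ m : ℕ,
      (∫ γ' in Ys,
          |(∫ γ in Ys,
              kIterM (volume.restrict Ys)
                (fun γ γ' => ∫ x in Xs, htil γ' x * stil x γ) m γ γ' * νt γ)
            - pitil γ'|)
        ≤ ∫ γ in Ys, R γ (m + 1) * νt γ) :
    ∀ ν : (Fin p → ℝ) → ℝ, (∀ x, 0 ≤ ν x) → (∫ x in Xs, ν x) = 1 →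
      ∀ m : ℕ,
      (∫ x' in Xs,
          |(∫ x in Xs,
              kIterM (volume.restrict Xs)
                (fun x x' => ∫ γ in Ys, stil x' γ * htil γ x) m x x' * ν x)
            - (∫ γ in Ys, stil x' γ * pitil γ)|)
        ≤ ∫ x in Xs, (∫ γ in Ys, R γ m * htil γ x) * ν x := by
  have hS : IsMarkovDensity (volume.restrict Ys) (volume.restrict Xs) fun γ x => stil x γ :=
    ⟨hsmeas.comp measurable_swap, fun γ x => hsnn x γ, (ae_restrict_mem hYs).mono hsint⟩
  have hH : IsMarkovDensity (volume.restrict Xs) (volume.restrict Ys) fun x γ => htil γ x :=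
    ⟨hhmeas.comp measurable_swap, fun x γ => hhnn γ x, (ae_restrict_mem hXs).mono hhint⟩
  have hkX : (fun x x' => ∫ γ in Ys, stil x' γ * htil γ x) =
      compDensity (volume.restrict Ys) (fun x γ => htil γ x) fun γ x => stil x γ := by
    funext _ _
    simp only [compDensity, mul_comm]
  have hkY : (fun γ γ' => ∫ x in Xs, htil γ' x * stil x γ) =
      compDensity (volume.restrict Xs) (fun γ x => stil x γ) fun x γ => htil γ x := by
    funext _ _
    simp only [compDensity, mul_comm]
  rw [hkY] at hflip
  intro ν hν0 hν1 m
  rw [hkX]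
  exact integral_abs_pushDensity_kIterM_sub_le hH hS
    (.of_integral_ne_zero (by rw [hpitint]; exact one_ne_zero)) (fun γ m => (hRpos γ m).le)
    hflip0 hflip hν0 hν1 m

/-- total variation bounds for a chain in terms of bounds for the
flipped chain.  Here `stil x γ` denotes s̃(x|γ), `htil γ x` denotes h̃(γ|x),
k(x,x') = ∫_Y s̃(x'|γ) h̃(γ|x) dγ, k̃(γ,γ') = ∫_X h̃(γ'|x) s̃(x|γ) dx,
π̃ is a stationary density of k̃ and π(x) = ∫_Y s̃(x|γ) π̃(γ) dγ.
The hypothesis on the flipped chain is split into the case m = 0 (where the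
0-step kernel is the identity) and m ≥ 1. -/
theorem tv_bound_from_flipped_chain
    (p q : ℕ) (Xs : Set (Fin p → ℝ)) (Ys : Set (Fin q → ℝ))
    (hXs : MeasurableSet Xs) (hYs : MeasurableSet Ys)
    (stil : (Fin p → ℝ) → (Fin q → ℝ) → ℝ) (htil : (Fin q → ℝ) → (Fin p → ℝ) → ℝ)
    (hsmeas : Measurable (Function.uncurry stil))
    (hhmeas : Measurable (Function.uncurry htil))
    (hsnn : ∀ x γ, 0 ≤ stil x γ) (hhnn : ∀ γ x, 0 ≤ htil γ x)
    (hsint : ∀ γ ∈ Ys, (∫ x in Xs, stil x γ) = 1)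
    (hhint : ∀ x ∈ Xs, (∫ γ in Ys, htil γ x) = 1)
    (pitil : (Fin q → ℝ) → ℝ) (hpitnn : ∀ γ, 0 ≤ pitil γ)
    (hpitint : (∫ γ in Ys, pitil γ) = 1)
    (hstat : ∀ γ' ∈ Ys,
      (∫ γ in Ys, (∫ x in Xs, htil γ' x * stil x γ) * pitil γ) = pitil γ')
    (R : (Fin q → ℝ) → ℕ → ℝ) (hRpos : ∀ γ m, 0 < R γ m)
    (hflip0 : ∀ νt : (Fin q → ℝ) → ℝ, (∀ γ, 0 ≤ νt γ) → (∫ γ in Ys, νt γ) = 1 →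
      (∫ γ' in Ys, |νt γ' - pitil γ'|) ≤ ∫ γ in Ys, R γ 0 * νt γ)
    (hflip : ∀ νt : (Fin q → ℝ) → ℝ, (∀ γ, 0 ≤ νt γ) → (∫ γ in Ys, νt γ) = 1 →
      ∀ m : ℕ,
      (∫ γ' in Ys,
          |(∫ γ in Ys,
              kIterM (volume.restrict Ys)
                (fun γ γ' => ∫ x in Xs, htil γ' x * stil x γ) m γ γ' * νt γ)
            - pitil γ'|)
        ≤ ∫ γ in Ys, R γ (m + 1) * νt γ) :
    ∀ ν : (Fin p → ℝ) → ℝ, (∀ x, 0 ≤ ν x) → (∫ x in Xs, ν x) = 1 →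
      ∀ m : ℕ,
      (∫ x' in Xs,
          |(∫ x in Xs,
              kIterM (volume.restrict Xs)
                (fun x x' => ∫ γ in Ys, stil x' γ * htil γ x) m x x' * ν x)
            - (∫ γ in Ys, stil x' γ * pitil γ)|)
        ≤ ∫ x in Xs, (∫ γ in Ys, R γ m * htil γ x) * ν x :=
  tv_bound_from_flipped_chain_general p q Xs Ys hXs hYs stil htil hsmeas hhmeas hsnn hhnn hsint
    hhint pitil hpitint R hRpos hflip0 hflip
end

section
/- The posterior mode B̂ is a fixed point of the mean of Albert and Chib's transition density: ∫_{ℝ^p} β · k_AC(B̂, β) dβ = B̂. -/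
/-
Let P(z) = ∏ᵢ TN(XᵢᵀB̂, 1; Yᵢ)(zᵢ) and μ(z) = Σ⁻¹(Xᵀz + Qv). Since N(μ(z), Σ⁻¹) has mean μ(z),
Fubini gives ∫ β k_AC(B̂, β) dβ = ∫ P(z) μ(z) dz, and as μ is affine this is Σ⁻¹(Xᵀ m + Qv) with
m the mean of P. The coordinates of z are independent truncated normals, so mᵢ = XᵢᵀB̂ + wᵢ with
wᵢ = φ/Φ or -φ/(1 - Φ) at XᵢᵀB̂. The mode equation says exactly Xᵀw = Q(B̂ - v), whence
Xᵀm + Qv = ΣB̂.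
-/

open MeasureTheory Matrix Filter

noncomputable section

/-- standard normal pdf -/
def nphi (x : ℝ) : ℝ := (Real.sqrt (2 * Real.pi))⁻¹ * Real.exp (-(x ^ 2) / 2)

/-- standard normal cdf -/
def nPhi (x : ℝ) : ℝ := ∫ t in Set.Iic x, nphi t

/-- density of TN(θ,1;1) (if b = true) resp. TN(θ,1;0) (if b = false) at z -/
def tn (θ : ℝ) (b : Bool) (z : ℝ) : ℝ :=
  if b then (if 0 < z then nphi (z - θ) / nPhi θ else 0)
  else (if z < 0 then nphi (z - θ) / (1 - nPhi θ) else 0)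

/-- p-variate Gaussian density with mean μ and covariance matrix Λ -/
def mvn {p : ℕ} (μ : Fin p → ℝ) (Λ : Matrix (Fin p) (Fin p) ℝ) (x : Fin p → ℝ) : ℝ :=
  Real.sqrt (((2 * Real.pi) ^ p * Λ.det)⁻¹) *
    Real.exp (-(dotProduct (x - μ) (Λ⁻¹.mulVec (x - μ))) / 2)

/-- squared Euclidean norm -/
def normSq {m : ℕ} (x : Fin m → ℝ) : ℝ := ∑ i, x i ^ 2

/-- Albert and Chib's Markov transition density, with Σ = XᵀX + Q -/
def kAC {n p : ℕ} (X : Matrix (Fin n) (Fin p) ℝ) (Y : Fin n → Bool)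
    (v : Fin p → ℝ) (Q : Matrix (Fin p) (Fin p) ℝ) (β β' : Fin p → ℝ) : ℝ :=
  ∫ z : Fin n → ℝ,
    mvn ((Xᵀ * X + Q)⁻¹.mulVec (Xᵀ.mulVec z + Q.mulVec v)) (Xᵀ * X + Q)⁻¹ β' *
      ∏ i, tn (dotProduct (X i) β) (Y i) (z i)

/-- the defining property of the posterior mode B̂ -/
def IsPosteriorMode {n p : ℕ} (X : Matrix (Fin n) (Fin p) ℝ) (Y : Fin n → Bool)
    (v : Fin p → ℝ) (Q : Matrix (Fin p) (Fin p) ℝ) (Bhat : Fin p → ℝ) : Prop :=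
  (∑ i, (if Y i then nphi (dotProduct (X i) Bhat) / nPhi (dotProduct (X i) Bhat)
          else -(nphi (dotProduct (X i) Bhat) / (1 - nPhi (dotProduct (X i) Bhat)))) • X i)
    - Q.mulVec (Bhat - v) = 0

open Set Topology

lemma nphi_eq_gaussianPDFReal : nphi = ProbabilityTheory.gaussianPDFReal 0 1 := by
  ext x
  simp [nphi, ProbabilityTheory.gaussianPDFReal]

lemma nphi_pos (x : ℝ) : 0 < nphi x := by
  rw [nphi_eq_gaussianPDFReal]
  exact ProbabilityTheory.gaussianPDFReal_pos 0 1 x one_ne_zero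

lemma nphi_neg (x : ℝ) : nphi (-x) = nphi x := by
  simp [nphi]

lemma integrable_nphi : Integrable nphi := by
  rw [nphi_eq_gaussianPDFReal]
  exact ProbabilityTheory.integrable_gaussianPDFReal 0 1

lemma integral_nphi : ∫ x, nphi x = 1 := by
  rw [nphi_eq_gaussianPDFReal]
  exact ProbabilityTheory.integral_gaussianPDFReal_eq_one 0 one_ne_zero

lemma integrable_mul_nphi : Integrable fun x => x * nphi x := by
  refine ((integrable_rpow_mul_exp_neg_mul_sq (by norm_num : (0 : ℝ) < 2⁻¹)
    (by norm_num : (-1 : ℝ) < 1)).const_mul (Real.sqrt (2 * Real.pi))⁻¹).congr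
    (ae_of_all _ fun x => ?_)
  simp only [nphi, Real.rpow_one]
  ring_nf

lemma hasDerivAt_nphi (x : ℝ) : HasDerivAt nphi (-x * nphi x) x := by
  have h : HasDerivAt (fun t : ℝ => -(t ^ 2) / 2) (-(2 * x) / 2) x := by
    simpa using (hasDerivAt_pow 2 x).neg.div_const 2
  unfold nphi
  exact (h.exp.const_mul _).congr_deriv (by ring)

lemma tendsto_nphi_atTop : Tendsto nphi atTop (𝓝 0) := by
  have h : Tendsto (fun x : ℝ => -(x ^ 2) / 2) atTop atBot := by
    simp_rw [neg_div]
    exact tendsto_neg_atTop_atBot.comp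
      ((tendsto_pow_atTop two_ne_zero).atTop_div_const two_pos)
  have h' := (Real.tendsto_exp_atBot.comp h).const_mul (Real.sqrt (2 * Real.pi))⁻¹
  rw [mul_zero] at h'
  exact h'

lemma integral_Ioi_nphi (a : ℝ) : ∫ x in Ioi a, nphi x = 1 - nPhi a := by
  rw [← integral_nphi, ← intervalIntegral.integral_Iic_add_Ioi integrable_nphi.integrableOn
    integrable_nphi.integrableOn, nPhi, add_sub_cancel_left]

lemma nPhi_neg (a : ℝ) : nPhi (-a) = 1 - nPhi a := by
  rw [nPhi, ← integral_comp_neg_Ioi]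
  simp_rw [nphi_neg, integral_Ioi_nphi]

lemma nPhi_pos (a : ℝ) : 0 < nPhi a := by
  have hsupp : Function.support nphi = univ :=
    eq_univ_of_forall fun x => (nphi_pos x).ne'
  rw [nPhi, setIntegral_pos_iff_support_of_nonneg_ae (ae_of_all _ fun x => (nphi_pos x).le)
    integrable_nphi.integrableOn, hsupp, univ_inter, Real.volume_Iic]
  exact ENNReal.zero_lt_top

lemma integral_Ioi_mul_nphi (a : ℝ) : ∫ x in Ioi a, x * nphi x = nphi a := by
  have h := integral_Ioi_of_hasDerivAt_of_tendsto' (f' := fun x => x * nphi x)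
    (f := fun x => -nphi x) (a := a) (fun x _ => (hasDerivAt_nphi x).neg.congr_deriv (by ring))
    integrable_mul_nphi.integrableOn tendsto_nphi_atTop.neg
  simpa using h

def tnMeanShift (θ : ℝ) (b : Bool) : ℝ :=
  if b then nphi θ / nPhi θ else -(nphi θ / (1 - nPhi θ))

lemma tn_true (θ : ℝ) : tn θ true = (Ioi 0).indicator fun z => nphi (z - θ) / nPhi θ := by
  ext z
  simp [tn, indicator]

lemma tn_false (θ z : ℝ) : tn θ false z = tn (-θ) true (-z) := by
  simp only [tn, Bool.false_eq_true, ↓reduceIte, neg_pos, nPhi_neg, sub_neg_eq_add,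
    neg_add_eq_sub, ← neg_sub z θ, nphi_neg]

lemma mul_tn_true (θ : ℝ) :
    (fun z => z * tn θ true z) = (Ioi 0).indicator fun z => z * nphi (z - θ) / nPhi θ := by
  ext z
  simp only [tn_true, indicator]
  split_ifs <;> ring

lemma tn_nonneg (θ : ℝ) (b : Bool) (z : ℝ) : 0 ≤ tn θ b z := by
  have h (θ z : ℝ) : 0 ≤ tn θ true z := by
    rw [tn_true]
    exact indicator_nonneg (fun z _ => div_nonneg (nphi_pos _).le (nPhi_pos θ).le) z
  cases b
  · rw [tn_false]
    exact h _ _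
  · exact h θ z

lemma setIntegral_Ioi_comp_sub {E : Type*} [NormedAddCommGroup E] [NormedSpace ℝ E]
    (f : ℝ → E) (a θ : ℝ) : ∫ x in Ioi a, f (x - θ) = ∫ x in Ioi (a - θ), f x := by
  have h := (measurePreserving_sub_right volume θ).setIntegral_preimage_emb
    (measurableEmbedding_subRight θ) f (Ioi (a - θ))
  rwa [preimage_sub_const_Ioi, sub_add_cancel] at h

lemma integral_Ioi_zero_nphi_sub (θ : ℝ) : ∫ z in Ioi 0, nphi (z - θ) = nPhi θ := by
  rw [setIntegral_Ioi_comp_sub nphi, zero_sub, integral_Ioi_nphi, nPhi_neg, sub_sub_cancel]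

lemma integral_Ioi_zero_mul_nphi_sub (θ : ℝ) :
    ∫ z in Ioi 0, z * nphi (z - θ) = θ * nPhi θ + nphi θ := by
  have hshift : ∫ z in Ioi 0, (z - θ) * nphi (z - θ) = nphi θ := by
    rw [setIntegral_Ioi_comp_sub (fun u => u * nphi u), zero_sub, integral_Ioi_mul_nphi, nphi_neg]
  have hint : Integrable fun z => nphi (z - θ) := integrable_nphi.comp_sub_right θ
  have hint' : Integrable fun z => (z - θ) * nphi (z - θ) :=
    integrable_mul_nphi.comp_sub_right θ
  calc ∫ z in Ioi 0, z * nphi (z - θ)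
      = ∫ z in Ioi 0, (θ * nphi (z - θ) + (z - θ) * nphi (z - θ)) := by
        congr 1; ext z; ring
    _ = θ * nPhi θ + nphi θ := by
        rw [integral_add (hint.const_mul θ).integrableOn hint'.integrableOn, integral_const_mul,
          integral_Ioi_zero_nphi_sub, hshift]

lemma integrable_tn (θ : ℝ) (b : Bool) : Integrable (tn θ b) := by
  have h (θ : ℝ) : Integrable (tn θ true) := by
    rw [tn_true]
    exact ((integrable_nphi.comp_sub_right θ).div_const _).indicator measurableSet_Ioi
  cases b
  · simp_rw [funext (tn_false θ)]
    exact (h (-θ)).comp_neg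
  · exact h θ

lemma integrable_mul_tn (θ : ℝ) (b : Bool) : Integrable fun z => z * tn θ b z := by
  have h (θ : ℝ) : Integrable fun z => z * tn θ true z := by
    rw [mul_tn_true]
    refine Integrable.indicator ?_ measurableSet_Ioi
    refine (((integrable_mul_nphi.comp_sub_right θ).add
      ((integrable_nphi.comp_sub_right θ).const_mul θ)).div_const (nPhi θ)).congr
      (ae_of_all _ fun z => ?_)
    simp only [Pi.add_apply]
    ring
  cases b
  · simp_rw [tn_false]
    exact (h (-θ)).comp_neg.neg.congr (ae_of_all _ fun z => by simp)
  · exact h θ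

lemma integral_tn (θ : ℝ) (b : Bool) : ∫ z, tn θ b z = 1 := by
  have h (θ : ℝ) : ∫ z, tn θ true z = 1 := by
    rw [tn_true, integral_indicator measurableSet_Ioi, integral_div,
      integral_Ioi_zero_nphi_sub, div_self (nPhi_pos θ).ne']
  cases b
  · simp_rw [tn_false]
    rw [integral_neg_eq_self (tn (-θ) true), h]
  · exact h θ

lemma integral_mul_tn (θ : ℝ) (b : Bool) : ∫ z, z * tn θ b z = θ + tnMeanShift θ b := by
  have h (θ : ℝ) : ∫ z, z * tn θ true z = θ + nphi θ / nPhi θ := by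
    rw [mul_tn_true, integral_indicator measurableSet_Ioi, integral_div,
      integral_Ioi_zero_mul_nphi_sub]
    field_simp [(nPhi_pos θ).ne']
  cases b
  · simp_rw [tn_false]
    have hneg := integral_neg_eq_self (fun z => -(z * tn (-θ) true z)) volume
    simp only [neg_mul, neg_neg, integral_neg] at hneg
    rw [hneg, h, tnMeanShift, if_neg Bool.false_ne_true, nphi_neg, nPhi_neg]
    ring
  · exact h θ

section ProductDensity

variable {ι : Type*} [Fintype ι]

lemma prod_mul_apply_eq_prod_update [DecidableEq ι] (f : ι → ℝ → ℝ) (z : ι → ℝ) (k : ι) :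
    (∏ i, f i (z i)) * z k = ∏ i, Function.update f k (fun t => t * f k t) i (z i) := by
  have hrest : ∏ i ∈ {k}ᶜ, Function.update f k (fun t => t * f k t) i (z i)
      = ∏ i ∈ {k}ᶜ, f i (z i) :=
    Finset.prod_congr rfl fun i hi => by rw [Function.update_of_ne (by simpa using hi)]
  rw [Fintype.prod_eq_mul_prod_compl k, Fintype.prod_eq_mul_prod_compl k, hrest,
    Function.update_self]
  ring

variable {f : ι → ℝ → ℝ}

lemma integrable_prod_smul_id (hf : ∀ i, Integrable (f i))
    (hf' : ∀ i, Integrable fun t => t * f i t) :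
    Integrable fun z : ι → ℝ => (∏ i, f i (z i)) • z := by
  classical
  refine Integrable.of_eval fun k => ?_
  simp only [Pi.smul_apply, smul_eq_mul, prod_mul_apply_eq_prod_update]
  refine Integrable.fintype_prod fun i => ?_
  rcases eq_or_ne i k with rfl | hik
  · simpa using hf' i
  · simpa [Function.update_of_ne hik] using hf i

lemma integral_prod_smul_id (hf : ∀ i, Integrable (f i))
    (hf' : ∀ i, Integrable fun t => t * f i t) (hf1 : ∀ i, ∫ t, f i t = 1) :
    ∫ z : ι → ℝ, (∏ i, f i (z i)) • z = fun k => ∫ t, t * f k t := by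
  classical
  ext k
  rw [eval_integral (integrable_pi_iff.1 (integrable_prod_smul_id hf hf')) k]
  simp only [Pi.smul_apply, smul_eq_mul, prod_mul_apply_eq_prod_update,
    integral_fintype_prod_volume_eq_prod]
  rw [Fintype.prod_eq_single k fun i hik => by rw [Function.update_of_ne hik, hf1],
    Function.update_self]

variable (θ : ι → ℝ) (b : ι → Bool)

lemma integrable_prod_tn : Integrable fun z : ι → ℝ => ∏ i, tn (θ i) (b i) (z i) :=
  Integrable.fintype_prod fun _ => integrable_tn _ _

lemma integral_prod_tn : ∫ z : ι → ℝ, ∏ i, tn (θ i) (b i) (z i) = 1 := by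
  simp [integral_fintype_prod_volume_eq_prod, integral_tn]

lemma integrable_prod_tn_smul_id :
    Integrable fun z : ι → ℝ => (∏ i, tn (θ i) (b i) (z i)) • z :=
  integrable_prod_smul_id (fun _ => integrable_tn _ _) fun _ => integrable_mul_tn _ _

lemma integral_prod_tn_smul_id :
    ∫ z : ι → ℝ, (∏ i, tn (θ i) (b i) (z i)) • z = fun i => θ i + tnMeanShift (θ i) (b i) := by
  rw [integral_prod_smul_id (fun _ => integrable_tn _ _) (fun _ => integrable_mul_tn _ _)
    fun _ => integral_tn _ _]
  simp_rw [integral_mul_tn]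

end ProductDensity

section ChangeOfVariables

variable {ι E : Type*} [Fintype ι] [DecidableEq ι] [NormedAddCommGroup E] {M : Matrix ι ι ℝ}

lemma measurableEmbedding_mulVec (hM : M.det ≠ 0) : MeasurableEmbedding (M *ᵥ ·) :=
  (toLinearEquiv' M (invertibleOfIsUnitDet M (isUnit_iff_ne_zero.2 hM))).toContinuousLinearEquiv
    |>.toHomeomorph.measurableEmbedding

lemma integral_comp_mulVec [NormedSpace ℝ E] (hM : M.det ≠ 0) (f : (ι → ℝ) → E) :
    ∫ x, f (M *ᵥ x) = |M.det|⁻¹ • ∫ x, f x := by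
  rw [← (measurableEmbedding_mulVec hM).integral_map,
    show (M *ᵥ ·) = ⇑(toLin' M) from rfl, Real.map_matrix_volume_pi_eq_smul_volume_pi hM,
    integral_smul_measure, ENNReal.toReal_ofReal (abs_nonneg _), abs_inv]

lemma integrable_comp_mulVec_iff (hM : M.det ≠ 0) {f : (ι → ℝ) → E} :
    Integrable (fun x => f (M *ᵥ x)) ↔ Integrable f := by
  rw [← Function.comp_def, ← (measurableEmbedding_mulVec hM).integrable_map_iff,
    show (M *ᵥ ·) = ⇑(toLin' M) from rfl, Real.map_matrix_volume_pi_eq_smul_volume_pi hM,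
    integrable_smul_measure (by simpa using hM) ENNReal.ofReal_ne_top]

end ChangeOfVariables

open scoped MatrixOrder in
lemma Matrix.PosDef.exists_mul_self_eq {n : Type*} [Fintype n] [DecidableEq n]
    {Λ : Matrix n n ℝ} (hΛ : Λ.PosDef) : ∃ B : Matrix n n ℝ, B * B = Λ ∧ Bᵀ = B ∧ B.det ≠ 0 := by
  have hBB := CFC.sqrt_mul_sqrt_self Λ hΛ.posSemidef.nonneg
  refine ⟨CFC.sqrt Λ, hBB, (CFC.sqrt_nonneg Λ).posSemidef.1, fun h => hΛ.det_pos.ne' ?_⟩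
  rw [← hBB, det_mul, h, zero_mul]

section Gaussian

variable {p : ℕ}

lemma mvn_nonneg (μ : Fin p → ℝ) (Λ : Matrix (Fin p) (Fin p) ℝ) (x : Fin p → ℝ) :
    0 ≤ mvn μ Λ x :=
  mul_nonneg (Real.sqrt_nonneg _) (Real.exp_pos _).le

lemma mvn_eq_mvn_zero (μ : Fin p → ℝ) (Λ : Matrix (Fin p) (Fin p) ℝ) (x : Fin p → ℝ) :
    mvn μ Λ x = mvn 0 Λ (x - μ) := by
  simp [mvn]

lemma mvn_zero_neg (Λ : Matrix (Fin p) (Fin p) ℝ) (x : Fin p → ℝ) :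
    mvn 0 Λ (-x) = mvn 0 Λ x := by
  simp [mvn, mulVec_neg]

lemma continuous_mvn (Λ : Matrix (Fin p) (Fin p) ℝ) :
    Continuous fun q : (Fin p → ℝ) × (Fin p → ℝ) => mvn q.1 Λ q.2 := by
  unfold mvn
  fun_prop

variable {E : Type*} [NormedAddCommGroup E] [NormedSpace ℝ E] {Λ B : Matrix (Fin p) (Fin p) ℝ}

lemma mvn_zero_mulVec (hBB : B * B = Λ) (hB : Bᵀ = B) (hdB : B.det ≠ 0) (y : Fin p → ℝ) :
    |B.det| * mvn 0 Λ (B *ᵥ y) = ∏ i, nphi (y i) := by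
  have hu : IsUnit B.det := isUnit_iff_ne_zero.2 hdB
  have hquad : (B *ᵥ y) ⬝ᵥ (Λ⁻¹ *ᵥ (B *ᵥ y)) = ∑ i, y i ^ 2 := by
    rw [← hBB, Matrix.mul_inv_rev, mulVec_mulVec, Matrix.mul_assoc, nonsing_inv_mul _ hu,
      Matrix.mul_one, ← hB, mulVec_transpose, ← dotProduct_mulVec, hB, mulVec_mulVec,
      mul_nonsing_inv _ hu, one_mulVec]
    simp [dotProduct, sq]
  have hconst : Real.sqrt (((2 * Real.pi) ^ p * Λ.det)⁻¹)
      = |B.det|⁻¹ * (Real.sqrt (2 * Real.pi))⁻¹ ^ p := by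
    have hpow : Real.sqrt ((2 * Real.pi) ^ p) = Real.sqrt (2 * Real.pi) ^ p := by
      rw [Real.sqrt_eq_iff_mul_self_eq (by positivity) (by positivity), ← mul_pow,
        Real.mul_self_sqrt (by positivity)]
    rw [← hBB, det_mul, Real.sqrt_inv, Real.sqrt_mul (by positivity), Real.sqrt_mul_self_eq_abs,
      hpow, inv_pow, mul_inv, mul_comm]
  simp only [mvn, sub_zero, hquad, hconst, nphi, Finset.prod_mul_distrib, Finset.prod_const,
    Finset.card_univ, Fintype.card_fin, ← Real.exp_sum]
  rw [← Finset.sum_div, Finset.sum_neg_distrib, neg_div, ← mul_assoc, ← mul_assoc,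
    mul_inv_cancel₀ (abs_ne_zero.2 hdB), one_mul]

lemma mvn_zero_mulVec_smul (hBB : B * B = Λ) (hB : Bᵀ = B) (hdB : B.det ≠ 0)
    (f : (Fin p → ℝ) → E) (y : Fin p → ℝ) :
    mvn 0 Λ (B *ᵥ y) • f (B *ᵥ y) = |B.det|⁻¹ • (∏ i, nphi (y i)) • f (B *ᵥ y) := by
  rw [← mvn_zero_mulVec hBB hB hdB y, smul_smul, inv_mul_cancel_left₀ (abs_ne_zero.2 hdB)]

lemma integral_mvn_zero_smul (hBB : B * B = Λ) (hB : Bᵀ = B) (hdB : B.det ≠ 0)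
    (f : (Fin p → ℝ) → E) :
    ∫ x, mvn 0 Λ x • f x = ∫ y, (∏ i, nphi (y i)) • f (B *ᵥ y) := by
  have h := integral_comp_mulVec hdB fun x => mvn 0 Λ x • f x
  simp_rw [mvn_zero_mulVec_smul hBB hB hdB, integral_smul] at h
  exact (smul_right_injective E (inv_ne_zero (abs_ne_zero.2 hdB)) h).symm

lemma integrable_mvn_zero_smul_iff (hBB : B * B = Λ) (hB : Bᵀ = B) (hdB : B.det ≠ 0)
    (f : (Fin p → ℝ) → E) :
    Integrable (fun x => mvn 0 Λ x • f x)
      ↔ Integrable fun y => (∏ i, nphi (y i)) • f (B *ᵥ y) := by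
  rw [← integrable_comp_mulVec_iff hdB]
  simp_rw [mvn_zero_mulVec_smul hBB hB hdB]
  exact integrable_smul_iff (inv_ne_zero (abs_ne_zero.2 hdB)) _

lemma integral_mvn_zero (hΛ : Λ.PosDef) : ∫ x, mvn 0 Λ x = 1 := by
  obtain ⟨B, hBB, hB, hdB⟩ := hΛ.exists_mul_self_eq
  simpa [integral_fintype_prod_volume_eq_prod, integral_nphi] using
    integral_mvn_zero_smul hBB hB hdB fun _ => (1 : ℝ)

lemma integrable_mvn_zero (hΛ : Λ.PosDef) : Integrable (mvn 0 Λ) := by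
  obtain ⟨B, hBB, hB, hdB⟩ := hΛ.exists_mul_self_eq
  have h := (integrable_mvn_zero_smul_iff hBB hB hdB fun _ => (1 : ℝ)).2 <| by
    simp only [smul_eq_mul, mul_one]
    exact Integrable.fintype_prod fun _ => integrable_nphi
  simpa using h

lemma integrable_mvn_zero_smul_id (hΛ : Λ.PosDef) : Integrable fun x => mvn 0 Λ x • x := by
  obtain ⟨B, hBB, hB, hdB⟩ := hΛ.exists_mul_self_eq
  rw [integrable_mvn_zero_smul_iff hBB hB hdB fun x => x]
  simpa [mulVec_smul] using (LinearMap.toContinuousLinearMap (mulVecLin B)).integrable_comp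
    (integrable_prod_smul_id (fun _ => integrable_nphi) fun _ => integrable_mul_nphi)

lemma integral_mvn_zero_smul_id : ∫ x, mvn 0 Λ x • x = 0 := by
  have h := integral_neg_eq_self (fun x => mvn 0 Λ x • x) volume
  simp only [mvn_zero_neg, smul_neg, integral_neg] at h
  exact neg_eq_self.1 h

lemma integrable_mvn_smul_id (hΛ : Λ.PosDef) (μ : Fin p → ℝ) :
    Integrable fun x => mvn μ Λ x • x := by
  have h := ((integrable_mvn_zero_smul_id hΛ).add
    ((integrable_mvn_zero hΛ).smul_const μ)).comp_sub_right μ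
  refine h.congr (ae_of_all _ fun x => ?_)
  simp only [Pi.add_apply]
  rw [← smul_add, sub_add_cancel, mvn_eq_mvn_zero μ]

lemma integral_mvn_smul_id (hΛ : Λ.PosDef) (μ : Fin p → ℝ) : ∫ x, mvn μ Λ x • x = μ := by
  have h : ∫ x, mvn μ Λ x • x = ∫ y, (mvn 0 Λ y • y + mvn 0 Λ y • μ) := by
    rw [← integral_sub_right_eq_self (fun y => mvn 0 Λ y • y + mvn 0 Λ y • μ) μ]
    simp only [← smul_add, sub_add_cancel, ← mvn_eq_mvn_zero]
  rw [h, integral_add (integrable_mvn_zero_smul_id hΛ) ((integrable_mvn_zero hΛ).smul_const μ),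
    integral_mvn_zero_smul_id, integral_smul_const, integral_mvn_zero hΛ, zero_add, one_smul]

lemma integral_mvn_mul_norm_le (hΛ : Λ.PosDef) (μ : Fin p → ℝ) :
    ∫ x, mvn μ Λ x * ‖x‖ ≤ (∫ x, mvn 0 Λ x * ‖x‖) + ‖μ‖ := by
  have hnorm (m x : Fin p → ℝ) : mvn m Λ x * ‖x‖ = ‖mvn m Λ x • x‖ := by
    rw [norm_smul, Real.norm_of_nonneg (mvn_nonneg m Λ x)]
  have hint : Integrable fun x => mvn 0 Λ x * ‖x‖ + mvn 0 Λ x * ‖μ‖ := by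
    simp_rw [hnorm 0]
    exact (integrable_mvn_zero_smul_id hΛ).norm.add ((integrable_mvn_zero hΛ).mul_const ‖μ‖)
  calc ∫ x, mvn μ Λ x * ‖x‖
      ≤ ∫ x, (mvn 0 Λ (x - μ) * ‖x - μ‖ + mvn 0 Λ (x - μ) * ‖μ‖) := by
        refine integral_mono (by simpa [hnorm] using (integrable_mvn_smul_id hΛ μ).norm)
          (hint.comp_sub_right μ) fun x => ?_
        rw [mvn_eq_mvn_zero μ, ← mul_add]
        exact mul_le_mul_of_nonneg_left (norm_le_norm_sub_add x μ) (mvn_nonneg _ _ _)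
    _ = (∫ x, mvn 0 Λ x * ‖x‖) + ‖μ‖ := by
        rw [integral_sub_right_eq_self (μ := volume)
            (fun y => mvn 0 Λ y * ‖y‖ + mvn 0 Λ y * ‖μ‖) μ,
          integral_add (by simpa [hnorm] using (integrable_mvn_zero_smul_id hΛ).norm)
            ((integrable_mvn_zero hΛ).mul_const ‖μ‖),
          integral_mul_const, integral_mvn_zero hΛ, one_mul]

end Gaussian

theorem integral_integral_mvn_mul_smul {p : ℕ} {Z : Type*} [MeasurableSpace Z] {ν : Measure Z}
    [SFinite ν] {Λ : Matrix (Fin p) (Fin p) ℝ} (hΛ : Λ.PosDef) {μ : Z → Fin p → ℝ}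
    (hμ : Measurable μ) {P : Z → ℝ} (hP0 : ∀ z, 0 ≤ P z) (hP : Integrable P ν)
    (hPμ : Integrable (fun z => P z • μ z) ν) :
    ∫ β, (∫ z, mvn (μ z) Λ β * P z ∂ν) • β = ∫ z, P z • μ z ∂ν := by
  set F : (Fin p → ℝ) × Z → Fin p → ℝ := fun q => (mvn (μ q.2) Λ q.1 * P q.2) • q.1
  have hsection (z : Z) : (fun β => F (β, z)) = fun β => P z • mvn (μ z) Λ β • β := by
    ext β
    simp only [F, smul_smul, mul_comm]
  have hFm : AEStronglyMeasurable F (volume.prod ν) :=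
    ((((continuous_mvn Λ).measurable.comp ((hμ.comp measurable_snd).prodMk measurable_fst))
      |>.aestronglyMeasurable.mul hP.aestronglyMeasurable.comp_snd).smul
        measurable_fst.aestronglyMeasurable)
  have hnorm (z : Z) :
      ∫ β, ‖F (β, z)‖ ≤ P z * (∫ x, mvn 0 Λ x * ‖x‖) + ‖P z • μ z‖ := by
    have h (β : Fin p → ℝ) : ‖F (β, z)‖ = P z * (mvn (μ z) Λ β * ‖β‖) := by
      rw [show F (β, z) = P z • mvn (μ z) Λ β • β from congrFun (hsection z) β, norm_smul,
        norm_smul, Real.norm_of_nonneg (hP0 z), Real.norm_of_nonneg (mvn_nonneg _ _ _)]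
    calc ∫ β, ‖F (β, z)‖ = P z * ∫ β, mvn (μ z) Λ β * ‖β‖ := by
          simp_rw [h]
          exact integral_const_mul _ _
      _ ≤ P z * ((∫ x, mvn 0 Λ x * ‖x‖) + ‖μ z‖) :=
          mul_le_mul_of_nonneg_left (integral_mvn_mul_norm_le hΛ (μ z)) (hP0 z)
      _ = P z * (∫ x, mvn 0 Λ x * ‖x‖) + ‖P z • μ z‖ := by
          rw [norm_smul, Real.norm_of_nonneg (hP0 z), mul_add]
  have hF : Integrable F (volume.prod ν) := by
    refine (integrable_prod_iff' hFm).2 ⟨ae_of_all _ fun z => ?_, ?_⟩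
    · rw [hsection]
      exact (integrable_mvn_smul_id hΛ (μ z)).smul (P z)
    · refine ((hP.mul_const (∫ x, mvn 0 Λ x * ‖x‖)).add hPμ.norm).mono'
        hFm.norm.prod_swap.integral_prod_right' (ae_of_all _ fun z => ?_)
      rw [Real.norm_of_nonneg (integral_nonneg fun _ => norm_nonneg _)]
      exact hnorm z
  calc ∫ β, (∫ z, mvn (μ z) Λ β * P z ∂ν) • β = ∫ β, ∫ z, F (β, z) ∂ν := by
        simp_rw [F, integral_smul_const]
    _ = ∫ z, (∫ β, F (β, z)) ∂ν := integral_integral_swap hF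
    _ = ∫ z, P z • μ z ∂ν := by
        simp_rw [hsection, integral_smul, integral_mvn_smul_id hΛ]

section Affine

variable {E F : Type*} [NormedAddCommGroup E] [NormedSpace ℝ E] [MeasurableSpace E]
  [NormedAddCommGroup F] [NormedSpace ℝ F] {ν : Measure E} {P : E → ℝ}

lemma integrable_smul_map_add (L : E →L[ℝ] F) (c : F) (hP : Integrable P ν)
    (hPz : Integrable (fun z => P z • z) ν) : Integrable (fun z => P z • (L z + c)) ν := by
  simp_rw [smul_add, ← map_smul]
  exact (L.integrable_comp hPz).add (hP.smul_const c)

lemma integral_smul_map_add [CompleteSpace E] [CompleteSpace F] (L : E →L[ℝ] F) (c : F)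
    (hP : Integrable P ν) (hPz : Integrable (fun z => P z • z) ν) :
    ∫ z, P z • (L z + c) ∂ν = L (∫ z, P z • z ∂ν) + (∫ z, P z ∂ν) • c := by
  simp_rw [smul_add, ← map_smul]
  rw [integral_add (L.integrable_comp hPz) (hP.smul_const c), L.integral_comp_comm hPz,
    integral_smul_const]

end Affine

lemma IsPosteriorMode.transpose_mulVec_add {n p : ℕ} {X : Matrix (Fin n) (Fin p) ℝ}
    {Y : Fin n → Bool} {v : Fin p → ℝ} {Q : Matrix (Fin p) (Fin p) ℝ} {Bhat : Fin p → ℝ}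
    (h : IsPosteriorMode X Y v Q Bhat) :
    Xᵀ *ᵥ (fun i => X i ⬝ᵥ Bhat + tnMeanShift (X i ⬝ᵥ Bhat) (Y i)) + Q *ᵥ v
      = (Xᵀ * X + Q) *ᵥ Bhat := by
  have h' : Xᵀ *ᵥ (fun i => tnMeanShift (X i ⬝ᵥ Bhat) (Y i)) = Q *ᵥ (Bhat - v) := by
    rw [mulVec_transpose, vecMul_eq_sum]
    exact sub_eq_zero.1 h
  rw [show (fun i => X i ⬝ᵥ Bhat + tnMeanShift (X i ⬝ᵥ Bhat) (Y i))
      = X *ᵥ Bhat + fun i => tnMeanShift (X i ⬝ᵥ Bhat) (Y i) from rfl,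
    mulVec_add, h', add_mulVec, mulVec_mulVec, mulVec_sub]
  abel

theorem posterior_mode_fixed_point_general
    (n p : ℕ)
    (X : Matrix (Fin n) (Fin p) ℝ) (Y : Fin n → Bool)
    (v : Fin p → ℝ) (Q : Matrix (Fin p) (Fin p) ℝ) (hQ : Q.PosSemidef)
    (hSig : IsUnit (Xᵀ * X + Q).det)
    (Bhat : Fin p → ℝ) (hmode : IsPosteriorMode X Y v Q Bhat) :
    (∫ β : Fin p → ℝ, kAC X Y v Q Bhat β • β) = Bhat := by
  set S := Xᵀ * X + Q with hSdef
  set P : (Fin n → ℝ) → ℝ := fun z => ∏ i, tn (X i ⬝ᵥ Bhat) (Y i) (z i)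
  have hS : S.PosDef := ((posSemidef_conjTranspose_mul_self X).add hQ).posDef_iff_isUnit.2
    ((isUnit_iff_isUnit_det S).2 hSig)
  set L := LinearMap.toContinuousLinearMap (mulVecLin (S⁻¹ * Xᵀ))
  have hμ (z : Fin n → ℝ) : S⁻¹ *ᵥ (Xᵀ *ᵥ z + Q *ᵥ v) = L z + S⁻¹ *ᵥ (Q *ᵥ v) := by
    simp only [L, LinearMap.coe_toContinuousLinearMap', mulVecLin_apply, mulVec_add,
      mulVec_mulVec]
  calc ∫ β, kAC X Y v Q Bhat β • β
      = ∫ z, P z • (S⁻¹ *ᵥ (Xᵀ *ᵥ z + Q *ᵥ v)) := by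
        refine integral_integral_mvn_mul_smul hS.inv (by fun_prop)
          (fun z => Finset.prod_nonneg fun i _ => tn_nonneg _ _ _) (integrable_prod_tn _ _) ?_
        rw [← hSdef]
        simp_rw [hμ]
        exact integrable_smul_map_add L _ (integrable_prod_tn _ _)
          (integrable_prod_tn_smul_id _ _)
    _ = S⁻¹ *ᵥ (Xᵀ *ᵥ (∫ z, P z • z) + Q *ᵥ v) := by
        simp_rw [hμ]
        rw [integral_smul_map_add L _ (integrable_prod_tn _ _) (integrable_prod_tn_smul_id _ _),
          integral_prod_tn, one_smul]
    _ = Bhat := by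
        rw [integral_prod_tn_smul_id, hmode.transpose_mulVec_add, mulVec_mulVec,
          nonsing_inv_mul S hSig, one_mulVec]

/-- the posterior mode is a fixed point of the mean of Albert and
Chib's transition density. -/
theorem posterior_mode_fixed_point
    (n p : ℕ) (hn : 1 ≤ n) (hp : 1 ≤ p)
    (X : Matrix (Fin n) (Fin p) ℝ) (Y : Fin n → Bool)
    (v : Fin p → ℝ) (Q : Matrix (Fin p) (Fin p) ℝ) (hQ : Q.PosSemidef)
    (hSig : IsUnit (Xᵀ * X + Q).det)
    (Bhat : Fin p → ℝ) (hmode : IsPosteriorMode X Y v Q Bhat) :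
    (∫ β : Fin p → ℝ, kAC X Y v Q Bhat β • β) = Bhat :=
  posterior_mode_fixed_point_general n p X Y v Q hQ hSig Bhat hmode
end
end

section
/- Let X₁ be a random vector in ℝ^p with E[X₁X₁ᵀ] finite and positive definite, let G : ℝ^p → (0,1) be measurable, and assume that for the open orthant S_j of ℝ^p and every β ≠ 0 one has P( (1_{S_j}(X₁) + 1_{S_j}(−X₁)) X₁ᵀβ ≠ 0 ) > 0. Then the p×p matrix E[ X₁X₁ᵀ · 1_{S_j}(X₁) · (1 − G(X₁)) ] + E[ X₁X₁ᵀ · 1_{S_j}(−X₁) · G(X₁) ] is positive definite; equivalently its smallest eigenvalue is strictly positive. -/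
/-!
The two integrals add up to `E[X₁X₁ᵀ w]` with the weight `w = 1_S(X₁)(1 - G(X₁)) + 1_S(-X₁) G(X₁)`,
whose quadratic form is `β ↦ E[(X₁ᵀβ)² w]`. Since `0 < G < 1`, the weight is nonnegative and
vanishes exactly where `1_S(X₁) + 1_S(-X₁)` does, so the support of `(X₁ᵀβ)² w` is the event of
the orthant condition, which has positive probability for `β ≠ 0`.
-/

open MeasureTheory Matrix

/-- membership of x in the open orthant of ℝ^p determined by the sign pattern s -/
def inOrth {p : ℕ} (s : Fin p → Bool) (x : Fin p → ℝ) : Prop :=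
  ∀ k, if s k then 0 < x k else x k < 0

lemma measurableSet_inOrth {p : ℕ} (s : Fin p → Bool) :
    MeasurableSet {x : Fin p → ℝ | inOrth s x} := by
  simp only [inOrth, Set.ofPred_forall]
  refine MeasurableSet.iInter fun k => ?_
  cases s k
  · exact measurableSet_lt (measurable_pi_apply k) measurable_const
  · exact measurableSet_lt measurable_const (measurable_pi_apply k)

lemma sum_sum_mul_mul_eq_dotProduct_sq_mul {n : Type*} [Fintype n] (x β : n → ℝ) (c : ℝ) :
    ∑ k, ∑ l, β k * β l * (x k * x l * c) = (x ⬝ᵥ β) ^ 2 * c := by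
  rw [sq, dotProduct, Finset.sum_mul_sum, Finset.sum_mul]
  refine Finset.sum_congr rfl fun k _ => ?_
  rw [Finset.sum_mul]
  exact Finset.sum_congr rfl fun l _ => by ring

section WeightedSecondMoment

variable {Ω n : Type*} [MeasurableSpace Ω] {μ : Measure Ω} {X : Ω → n → ℝ} {w w' : Ω → ℝ}

noncomputable def weightedSecondMoment (μ : Measure Ω) (X : Ω → n → ℝ) (w : Ω → ℝ) :
    Matrix n n ℝ :=
  Matrix.of fun k l => ∫ ω, X ω k * X ω l * w ω ∂μ

lemma weightedSecondMoment_add (hw : ∀ k l, Integrable (fun ω => X ω k * X ω l * w ω) μ)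
    (hw' : ∀ k l, Integrable (fun ω => X ω k * X ω l * w' ω) μ) :
    weightedSecondMoment μ X (w + w') =
      weightedSecondMoment μ X w + weightedSecondMoment μ X w' := by
  ext k l
  simp only [weightedSecondMoment, Matrix.add_apply, Matrix.of_apply, Pi.add_apply, mul_add]
  exact integral_add (hw k l) (hw' k l)

lemma weightedSecondMoment_isHermitian : (weightedSecondMoment μ X w).IsHermitian := by
  ext k l
  simp only [weightedSecondMoment, conjTranspose_apply, Matrix.of_apply, star_trivial,
    mul_comm (X _ k) (X _ l)]

variable [Fintype n]

lemma integrable_dotProduct_sq_mul (hw : ∀ k l, Integrable (fun ω => X ω k * X ω l * w ω) μ)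
    (β : n → ℝ) : Integrable (fun ω => (X ω ⬝ᵥ β) ^ 2 * w ω) μ := by
  simp only [← sum_sum_mul_mul_eq_dotProduct_sq_mul]
  exact integrable_finsetSum _ fun k _ => integrable_finsetSum _ fun l _ =>
    (hw k l).const_mul (β k * β l)

lemma dotProduct_weightedSecondMoment_mulVec
    (hw : ∀ k l, Integrable (fun ω => X ω k * X ω l * w ω) μ) (β : n → ℝ) :
    β ⬝ᵥ (weightedSecondMoment μ X w *ᵥ β) = ∫ ω, (X ω ⬝ᵥ β) ^ 2 * w ω ∂μ := by
  have hterm : ∀ k l, Integrable (fun ω => β k * β l * (X ω k * X ω l * w ω)) μ :=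
    fun k l => (hw k l).const_mul _
  simp only [← sum_sum_mul_mul_eq_dotProduct_sq_mul]
  rw [integral_finsetSum _ fun k _ => integrable_finsetSum _ fun l _ => hterm k l]
  simp only [integral_finsetSum _ fun l _ => hterm _ l, integral_const_mul, weightedSecondMoment,
    dotProduct, mulVec, Matrix.of_apply, Finset.mul_sum]
  exact Finset.sum_congr rfl fun k _ => Finset.sum_congr rfl fun l _ => by ring

lemma weightedSecondMoment_posDef (hw : ∀ k l, Integrable (fun ω => X ω k * X ω l * w ω) μ)
    (hw_nonneg : ∀ ω, 0 ≤ w ω) (hpos : ∀ β : n → ℝ, β ≠ 0 → 0 < μ {ω | w ω * X ω ⬝ᵥ β ≠ 0}) :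
    (weightedSecondMoment μ X w).PosDef := by
  refine posDef_iff_dotProduct_mulVec.2 ⟨weightedSecondMoment_isHermitian, fun β hβ => ?_⟩
  rw [star_trivial, dotProduct_weightedSecondMoment_mulVec hw, integral_pos_iff_support_of_nonneg
    (fun ω => mul_nonneg (sq_nonneg _) (hw_nonneg ω)) (integrable_dotProduct_sq_mul hw β)]
  convert hpos β hβ using 2
  ext ω
  simp [and_comm]

end WeightedSecondMoment

lemma MeasureTheory.Integrable.mul_ite_mul {Ω : Type*} [MeasurableSpace Ω] {μ : Measure Ω}
    {f t : Ω → ℝ} {Q : Ω → Prop} [DecidablePred Q] (hf : Integrable f μ) (hQ : MeasurableSet {ω | Q ω})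
    (ht : Measurable t) (ht_le : ∀ ω, |t ω| ≤ 1) :
    Integrable (fun ω => f ω * ((if Q ω then 1 else 0) * t ω)) μ :=
  hf.mul_bdd (c := 1)
    ((Measurable.ite hQ measurable_const measurable_const).mul ht).aestronglyMeasurable
    (ae_of_all _ fun ω => by split_ifs <;> simp [ht_le ω])

section Mixture

variable (A B : Prop) [Decidable A] [Decidable B] {g : ℝ}

lemma ite_mul_one_sub_add_ite_mul_nonneg (hg : g ∈ Set.Ioo 0 1) :
    0 ≤ (if A then 1 else 0) * (1 - g) + (if B then 1 else 0) * g := by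
  obtain ⟨hg₀, hg₁⟩ := hg
  split_ifs <;> linarith

lemma ite_mul_one_sub_add_ite_mul_eq_zero_iff (hg : g ∈ Set.Ioo 0 1) :
    (if A then 1 else 0) * (1 - g) + (if B then 1 else 0) * g = 0 ↔
      (if A then 1 else 0) + (if B then (1 : ℝ) else 0) = 0 := by
  obtain ⟨hg₀, hg₁⟩ := hg
  split_ifs <;> constructor <;> intro <;> linarith

end Mixture

open Classical in
theorem orthant_second_moment_posdef_general
    (p : ℕ)
    (Ω : Type*) [MeasurableSpace Ω] (P : Measure Ω)
    (X1 : Ω → Fin p → ℝ) (hX1 : Measurable X1)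
    (G : (Fin p → ℝ) → ℝ) (hG : Measurable G) (hGrange : ∀ x, G x ∈ Set.Ioo (0 : ℝ) 1)
    (hint : ∀ k l, Integrable (fun ω => X1 ω k * X1 ω l) P)
    (s : Fin p → Bool)
    (hA3 : ∀ β : Fin p → ℝ, β ≠ 0 →
      0 < P {ω | ((if inOrth s (X1 ω) then (1 : ℝ) else 0) +
                  (if inOrth s (-(X1 ω)) then (1 : ℝ) else 0)) * dotProduct (X1 ω) β ≠ 0}) :
    (Matrix.of fun k l =>
        (∫ ω, X1 ω k * X1 ω l * (if inOrth s (X1 ω) then (1 : ℝ) else 0) * (1 - G (X1 ω)) ∂P)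
      + (∫ ω, X1 ω k * X1 ω l * (if inOrth s (-(X1 ω)) then (1 : ℝ) else 0) * G (X1 ω) ∂P)).PosDef := by
  set w₁ : Ω → ℝ := fun ω => (if inOrth s (X1 ω) then 1 else 0) * (1 - G (X1 ω))
  set w₂ : Ω → ℝ := fun ω => (if inOrth s (-(X1 ω)) then 1 else 0) * G (X1 ω)
  have hGX : Measurable fun ω => G (X1 ω) := hG.comp hX1
  have hGbound : ∀ ω, |1 - G (X1 ω)| ≤ 1 ∧ |G (X1 ω)| ≤ 1 := fun ω => by
    obtain ⟨hG₀, hG₁⟩ := hGrange (X1 ω)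
    constructor <;> rw [abs_le] <;> constructor <;> linarith
  have hint₁ : ∀ k l, Integrable (fun ω => X1 ω k * X1 ω l * w₁ ω) P := fun k l =>
    (hint k l).mul_ite_mul (hX1 (measurableSet_inOrth s)) (measurable_const.sub hGX)
      fun ω => (hGbound ω).1
  have hint₂ : ∀ k l, Integrable (fun ω => X1 ω k * X1 ω l * w₂ ω) P := fun k l =>
    (hint k l).mul_ite_mul (hX1 ((measurableSet_inOrth s).preimage measurable_neg)) hGX
      fun ω => (hGbound ω).2
  have hpos : (weightedSecondMoment P X1 (w₁ + w₂)).PosDef := by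
    refine weightedSecondMoment_posDef (fun k l => ?_) (fun ω => ?_) fun β hβ => ?_
    · simp only [Pi.add_apply, mul_add]
      exact (hint₁ k l).add (hint₂ k l)
    · exact ite_mul_one_sub_add_ite_mul_nonneg _ _ (hGrange (X1 ω))
    · convert hA3 β hβ using 2
      ext ω
      simp only [Set.mem_ofPred_eq, Pi.add_apply, w₁, w₂, ne_eq, mul_eq_zero,
        ite_mul_one_sub_add_ite_mul_eq_zero_iff _ _ (hGrange (X1 ω))]
  convert hpos using 1
  rw [weightedSecondMoment_add hint₁ hint₂]
  ext k l
  simp only [weightedSecondMoment, w₁, w₂, Matrix.add_apply, Matrix.of_apply, mul_assoc]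

open Classical in
/-- under (A2) and the orthant condition (A3) for the orthant S
determined by the sign pattern `s`, the matrix
E[X₁X₁ᵀ 1_S(X₁)(1−G(X₁))] + E[X₁X₁ᵀ 1_S(−X₁) G(X₁)] is positive definite. -/
theorem orthant_second_moment_posdef
    (p : ℕ) (hp : 1 ≤ p)
    (Ω : Type*) [MeasurableSpace Ω] (P : Measure Ω) [IsProbabilityMeasure P]
    (X1 : Ω → Fin p → ℝ) (hX1 : Measurable X1)
    (G : (Fin p → ℝ) → ℝ) (hG : Measurable G) (hGrange : ∀ x, G x ∈ Set.Ioo (0 : ℝ) 1)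
    (hint : ∀ k l, Integrable (fun ω => X1 ω k * X1 ω l) P)
    (hpd : (Matrix.of fun k l => ∫ ω, X1 ω k * X1 ω l ∂P).PosDef)
    (s : Fin p → Bool)
    (hA3 : ∀ β : Fin p → ℝ, β ≠ 0 →
      0 < P {ω | ((if inOrth s (X1 ω) then (1 : ℝ) else 0) +
                  (if inOrth s (-(X1 ω)) then (1 : ℝ) else 0)) * dotProduct (X1 ω) β ≠ 0}) :
    (Matrix.of fun k l =>
        (∫ ω, X1 ω k * X1 ω l * (if inOrth s (X1 ω) then (1 : ℝ) else 0) * (1 - G (X1 ω)) ∂P)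
      + (∫ ω, X1 ω k * X1 ω l * (if inOrth s (-(X1 ω)) then (1 : ℝ) else 0) * G (X1 ω) ∂P)).PosDef :=
  orthant_second_moment_posdef_general p Ω P X1 hX1 G hG hGrange hint s hA3
end
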